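/- Let K be irreducible, aperiodic, substochastic on countable S. Suppose the Yaglom limit K^n(x,y)/K^n(x,S) → π_x(y) holds for every x ∈ S, and the Jacka–Roberts limit ĥ(y) = lim_n K^n(y,S)/K^n(x₀,S) exists for all y for a fixed reference state x₀. Then ĥ is strictly positive and ρ-superharmonic: ∑_z K(x,z) ĥ(z) ≤ ρ ĥ(x) for all x. -/

import Mathlib

open Filter Topology

open scoped Classical in
/-- Matrix powers of a kernel `K` on a countable state space. -/
noncomputable def Kpow {S : Type*} (K : S → S → ℝ) : ℕ → S → S → ℝ
  | 0 => fun x y => if x = y then 1 else 0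
  | n + 1 => fun x y => ∑' z, Kpow K n x z * K z y

/-!
Write `T n x = ∑' y, Kⁿ(x, y)`. The Yaglom limit from `x₀` makes `T n x₀` comparable to a single
entry `Kⁿ(x₀, y₀)`, whose `n`-th root tends to `ρ`; hence for every `q > ρ` the ratio
`T (n + 1) x₀ / T n x₀` is frequently at most `q`. Along such `n`, dividing the first-step bound
`∑ z, K(x, z) T n z ≤ T (n + 1) x` by `T n x₀` and passing to the limit gives
`∑ z, K(x, z) ĥ(z) ≤ q ĥ(x)`. Positivity of `ĥ` propagates from `ĥ(x₀) = 1` backwards along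
positive paths.

The first-step bound needs the rows of `K` to be summable, which `∑' y, K x y ≤ 1` does not give
(a non-summable `tsum` is `0`); this too follows from the frequent ratio bound.
-/

open scoped ENNReal
open Relation

theorem summable_of_tsum_ne_zero {ι α : Type*} [AddCommMonoid α] [TopologicalSpace α]
    {f : ι → α} (h : ∑' i, f i ≠ 0) : Summable f :=
  by_contra fun hf => h (tsum_eq_zero_of_not_summable hf)

theorem eventually_pos_of_tendsto_rpow_inv {a : ℕ → ℝ} {ρ : ℝ} (ha : ∀ n, 0 ≤ a n)
    (hρ : 0 < ρ) (h : Tendsto (fun n : ℕ => a n ^ (n : ℝ)⁻¹) atTop (𝓝 ρ)) :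
    ∀ᶠ n in atTop, 0 < a n := by
  filter_upwards [h.eventually (eventually_gt_nhds hρ), eventually_ge_atTop 1] with n hn hn1
  refine (ha n).lt_of_ne' fun h0 => ?_
  rw [h0, Real.zero_rpow (inv_ne_zero (by positivity))] at hn
  exact lt_irrefl _ hn

theorem eventually_le_pow_of_tendsto_rpow_inv {a : ℕ → ℝ} {ρ q : ℝ} (ha : ∀ n, 0 ≤ a n)
    (h : Tendsto (fun n : ℕ => a n ^ (n : ℝ)⁻¹) atTop (𝓝 ρ)) (hq : ρ < q) :
    ∀ᶠ n in atTop, a n ≤ q ^ n := by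
  filter_upwards [h.eventually (eventually_lt_nhds hq), eventually_ge_atTop 1] with n hn hn1
  calc a n = (a n ^ (n : ℝ)⁻¹) ^ n := (Real.rpow_inv_natCast_pow (ha n) (by omega)).symm
    _ ≤ q ^ n := by gcongr; exact Real.rpow_nonneg (ha n) _

theorem frequently_add_le_pow_mul {T : ℕ → ℝ} {ρ q : ℝ} (hρ : 0 ≤ ρ) (hq : ρ < q)
    (hT : ∀ᶠ n in atTop, 0 < T n)
    (hgrowth : ∀ q', ρ < q' → ∃ C, ∀ᶠ n in atTop, T n ≤ C * q' ^ n)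
    {M : ℕ} (hM : 0 < M) : ∃ᶠ n in atTop, T (n + M) ≤ q ^ M * T n := by
  by_contra h
  rw [not_frequently] at h
  obtain ⟨q₂, hρq₂, hq₂q⟩ := exists_between hq
  have hq₂ : 0 < q₂ := hρ.trans_lt hρq₂
  have hq₀ : 0 < q := hq₂.trans hq₂q
  obtain ⟨C, hC⟩ := hgrowth q₂ hρq₂
  obtain ⟨N, hN⟩ := eventually_atTop.1 (h.and (hT.and hC))
  have hgrow : ∀ j, q ^ (M * j) * T N ≤ T (N + M * j) := by
    intro j
    induction j with
    | zero => simp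
    | succ j ih =>
      calc q ^ (M * (j + 1)) * T N = q ^ M * (q ^ (M * j) * T N) := by ring
        _ ≤ q ^ M * T (N + M * j) := by gcongr
        _ ≤ T (N + M * j + M) := (not_le.1 (hN (N + M * j) (by omega)).1).le
        _ = T (N + M * (j + 1)) := by ring_nf
  have hbound : ∀ j, T N ≤ C * q₂ ^ N * ((q₂ / q) ^ M) ^ j := by
    intro j
    have := (hgrow j).trans (hN (N + M * j) (by omega)).2.2
    rw [← pow_mul, div_pow, ← mul_div_assoc, le_div_iff₀ (by positivity), mul_assoc, ← pow_add]
    linarith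
  have hr : (q₂ / q) ^ M < 1 := pow_lt_one₀ (by positivity) ((div_lt_one hq₀).2 hq₂q) hM.ne'
  have hlim := (tendsto_pow_atTop_nhds_zero_of_lt_one (by positivity) hr).const_mul (C * q₂ ^ N)
  rw [mul_zero] at hlim
  linarith [ge_of_tendsto' hlim hbound, (hN N le_rfl).2.1]

section Kpow

variable {S : Type*} {K : S → S → ℝ}

noncomputable def rowMass (K : S → S → ℝ) (n : ℕ) (x : S) : ℝ := ∑' y, Kpow K n x y

theorem Kpow_succ (n : ℕ) (x y : S) : Kpow K (n + 1) x y = ∑' z, Kpow K n x z * K z y := rfl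

theorem Kpow_nonneg (hK : ∀ x y, 0 ≤ K x y) (n : ℕ) (x y : S) : 0 ≤ Kpow K n x y := by
  induction n generalizing y with
  | zero => simp only [Kpow]; split_ifs <;> norm_num
  | succ n ih => exact tsum_nonneg fun z => mul_nonneg (ih z) (hK z y)

theorem rowMass_nonneg (hK : ∀ x y, 0 ≤ K x y) (n : ℕ) (x : S) : 0 ≤ rowMass K n x :=
  tsum_nonneg fun y => Kpow_nonneg hK n x y

theorem exists_Kpow_pos_and_pos_of_Kpow_succ_pos (hK : ∀ x y, 0 ≤ K x y) {n : ℕ} {a b : S}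
    (h : 0 < Kpow K (n + 1) a b) : ∃ v, 0 < Kpow K n a v ∧ 0 < K v b := by
  obtain ⟨v, hv⟩ : ∃ v, Kpow K n a v * K v b ≠ 0 := by
    by_contra! h0
    simp [Kpow_succ, h0] at h
  obtain ⟨hav, hvb⟩ := mul_ne_zero_iff.1 hv
  exact ⟨v, (Kpow_nonneg hK n a v).lt_of_ne' hav, (hK v b).lt_of_ne' hvb⟩

theorem reflTransGen_of_Kpow_pos (hK : ∀ x y, 0 ≤ K x y) {n : ℕ} {a b : S}
    (h : 0 < Kpow K n a b) : ReflTransGen (fun u v => 0 < K u v) a b := by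
  induction n generalizing b with
  | zero =>
    obtain rfl : a = b := by
      by_contra hab
      simp [Kpow, hab] at h
    exact .refl
  | succ n ih =>
    obtain ⟨v, hav, hvb⟩ := exists_Kpow_pos_and_pos_of_Kpow_succ_pos hK h
    exact (ih hav).tail hvb

theorem Kpow_mul_le_Kpow_succ (hK : ∀ x y, 0 ≤ K x y) {n : ℕ} {z b : S}
    (h : 0 < Kpow K (n + 1) z b) (a : S) : Kpow K n z a * K a b ≤ Kpow K (n + 1) z b :=
  (summable_of_tsum_ne_zero h.ne').le_tsum a fun v _ => mul_nonneg (Kpow_nonneg hK n z v) (hK v b)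

theorem exists_pos_mul_le_Kpow_add (hK : ∀ x y, 0 ≤ K x y) {z a b : S}
    (hpos : ∀ w, ∀ᶠ n in atTop, 0 < Kpow K n z w) (hab : ReflTransGen (fun u v => 0 < K u v) a b) :
    ∃ k, ∃ c > 0, ∀ᶠ n in atTop, c * Kpow K n z a ≤ Kpow K (n + k) z b := by
  induction hab using ReflTransGen.head_induction_on with
  | refl => exact ⟨0, 1, one_pos, .of_forall fun n => by simp⟩
  | @head a a' haa' _ ih =>
    obtain ⟨k, c, hc, hev⟩ := ih
    refine ⟨k + 1, c * K a a', mul_pos hc haa', ?_⟩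
    filter_upwards [(tendsto_add_atTop_nat 1).eventually hev,
      (tendsto_add_atTop_nat 1).eventually (hpos a')] with n hn hn'
    calc c * K a a' * Kpow K n z a = c * (Kpow K n z a * K a a') := by ring
      _ ≤ c * Kpow K (n + 1) z a' := by gcongr; exact Kpow_mul_le_Kpow_succ hK hn' a
      _ ≤ Kpow K (n + (k + 1)) z b := by rwa [add_comm k, ← add_assoc]

theorem eventually_Kpow_mul_sum_le_rowMass (hK : ∀ x y, 0 ≤ K x y) {z : S}
    (hpos : ∀ w, ∀ᶠ n in atTop, 0 < Kpow K n z w) (hmass : ∀ᶠ n in atTop, 0 < rowMass K n z)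
    (a : S) (Y : Finset S) :
    ∀ᶠ n in atTop, Kpow K n z a * ∑ y ∈ Y, K a y ≤ rowMass K (n + 1) z := by
  have hposY := (eventually_all_finset Y).2 fun y _ => (tendsto_add_atTop_nat 1).eventually (hpos y)
  filter_upwards [hposY, (tendsto_add_atTop_nat 1).eventually hmass] with n hn hn'
  calc Kpow K n z a * ∑ y ∈ Y, K a y = ∑ y ∈ Y, Kpow K n z a * K a y := Finset.mul_sum ..
    _ ≤ ∑ y ∈ Y, Kpow K (n + 1) z y :=
      Finset.sum_le_sum fun y hy => Kpow_mul_le_Kpow_succ hK (hn y hy) a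
    _ ≤ rowMass K (n + 1) z :=
      (summable_of_tsum_ne_zero hn'.ne').sum_le_tsum Y fun y _ => Kpow_nonneg hK _ z y

end Kpow

section Yaglom

variable {S : Type*} {K : S → S → ℝ}

theorem exists_pos_mul_rowMass_lt_Kpow (hK : ∀ x y, 0 ≤ K x y) {π : S → ℝ}
    (hπnn : ∀ y, 0 ≤ π y) (hπ1 : ∑' y, π y = 1) {z : S}
    (hyag : ∀ y, Tendsto (fun n : ℕ => Kpow K n z y / rowMass K n z) atTop (𝓝 (π y))) :
    ∃ y, ∃ p > 0, ∀ᶠ n in atTop, 0 < rowMass K n z ∧ p * rowMass K n z < Kpow K n z y := by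
  obtain ⟨y, hy⟩ : ∃ y, π y ≠ 0 := by
    by_contra! h
    simp [h] at hπ1
  have hy : 0 < π y := (hπnn y).lt_of_ne' hy
  refine ⟨y, π y / 2, half_pos hy, ?_⟩
  filter_upwards [(hyag y).eventually (eventually_gt_nhds (half_lt_self hy))] with n hn
  have hmass : 0 < rowMass K n z := (rowMass_nonneg hK n z).lt_of_ne' fun h0 => by
    rw [h0, div_zero] at hn
    linarith
  exact ⟨hmass, (lt_div_iff₀ hmass).1 hn⟩

variable {ρ p : ℝ} {z y₀ : S}

theorem frequently_rowMass_add_le (hK : ∀ x y, 0 ≤ K x y) (hρ : 0 ≤ ρ) (hp : 0 < p)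
    (hcmp : ∀ᶠ n in atTop, 0 < rowMass K n z ∧ p * rowMass K n z < Kpow K n z y₀)
    (hroot : Tendsto (fun n : ℕ => Kpow K n z y₀ ^ (n : ℝ)⁻¹) atTop (𝓝 ρ))
    {q : ℝ} (hq : ρ < q) {M : ℕ} (hM : 0 < M) :
    ∃ᶠ n in atTop, rowMass K (n + M) z ≤ q ^ M * rowMass K n z := by
  refine frequently_add_le_pow_mul hρ hq (hcmp.mono fun _ h => h.1) (fun q' hq' => ?_) hM
  refine ⟨p⁻¹, ?_⟩
  filter_upwards [hcmp, eventually_le_pow_of_tendsto_rpow_inv (Kpow_nonneg hK · z y₀) hroot hq']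
    with n hn hn'
  rw [inv_mul_eq_div, le_div_iff₀ hp]
  linarith

/-- Along a positive path `y₀ → x` of length `k`, `Kⁿ⁺ᵏ(z, x)` is at least a fixed fraction of
`Kⁿ(z, y₀)`, hence of `T n z`; one more step spreads it over `K(x, ·)` inside `T (n + k + 1) z`,
which is frequently at most `q ^ (k + 1) * T n z`. -/
theorem summable_of_frequently_rowMass_add_le (hK : ∀ x y, 0 ≤ K x y)
    (hpos : ∀ w, ∀ᶠ n in atTop, 0 < Kpow K n z w) (hp : 0 < p)
    (hcmp : ∀ᶠ n in atTop, 0 < rowMass K n z ∧ p * rowMass K n z < Kpow K n z y₀) {q : ℝ}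
    (hdecay : ∀ M, 0 < M → ∃ᶠ n in atTop, rowMass K (n + M) z ≤ q ^ M * rowMass K n z)
    {x : S} (hreach : ReflTransGen (fun u v => 0 < K u v) y₀ x) : Summable (K x) := by
  obtain ⟨k, c, hc, hpeel⟩ := exists_pos_mul_le_Kpow_add hK hpos hreach
  refine summable_of_sum_le (c := q ^ (k + 1) / (c * p)) (fun y => hK x y) fun Y => ?_
  have hstep := (tendsto_add_atTop_nat k).eventually
    (eventually_Kpow_mul_sum_le_rowMass hK hpos (hcmp.mono fun _ h => h.1) x Y)
  obtain ⟨n, hdec, ⟨hmass, hy₀⟩, hpeel, hstep⟩ :=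
    ((hdecay (k + 1) k.succ_pos).and_eventually (hcmp.and (hpeel.and hstep))).exists
  have hY := Finset.sum_nonneg fun y (_ : y ∈ Y) => hK x y
  rw [le_div_iff₀ (by positivity), ← mul_le_mul_iff_left₀ hmass]
  calc (∑ y ∈ Y, K x y) * (c * p) * rowMass K n z
      = (∑ y ∈ Y, K x y) * (c * (p * rowMass K n z)) := by ring
    _ ≤ (∑ y ∈ Y, K x y) * (c * Kpow K n z y₀) := by gcongr
    _ ≤ Kpow K (n + k) z x * ∑ y ∈ Y, K x y := by rw [mul_comm]; gcongr
    _ ≤ rowMass K (n + k + 1) z := hstep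
    _ ≤ q ^ (k + 1) * rowMass K n z := hdec

end Yaglom

section Substochastic

variable {S : Type*} {K : S → S → ℝ}

open scoped Classical in
/-- `Kpow` computed in `ℝ≥0∞`, where nonnegative series can be rearranged freely. -/
noncomputable def ennKpow (K : S → S → ℝ) : ℕ → S → S → ℝ≥0∞
  | 0 => fun x y => if x = y then 1 else 0
  | n + 1 => fun x y => ∑' z, ennKpow K n x z * ENNReal.ofReal (K z y)

theorem ennKpow_succ' (n : ℕ) (x y : S) :
    ennKpow K (n + 1) x y = ∑' z, ENNReal.ofReal (K x z) * ennKpow K n z y := by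
  induction n generalizing y with
  | zero => simp [ennKpow]
  | succ n ih =>
    calc ennKpow K (n + 2) x y = ∑' v, ennKpow K (n + 1) x v * ENNReal.ofReal (K v y) := rfl
      _ = ∑' v, ∑' z, ENNReal.ofReal (K x z) * ennKpow K n z v * ENNReal.ofReal (K v y) := by
          simp only [ih, ENNReal.tsum_mul_right]
      _ = ∑' z, ENNReal.ofReal (K x z) * ennKpow K (n + 1) z y := by
          rw [ENNReal.tsum_comm]
          simp only [ennKpow, mul_assoc, ENNReal.tsum_mul_left]

variable (hK : ∀ x y, 0 ≤ K x y) (hrow : ∀ x, Summable (K x)) (hsub : ∀ x, ∑' y, K x y ≤ 1)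
include hK hrow hsub

theorem tsum_ennKpow_le_one (n : ℕ) (x : S) : ∑' y, ennKpow K n x y ≤ 1 := by
  induction n generalizing x with
  | zero => simp [ennKpow]
  | succ n ih =>
    calc ∑' y, ennKpow K (n + 1) x y
        = ∑' z, ennKpow K n x z * ∑' y, ENNReal.ofReal (K z y) := by
          simp only [ennKpow]
          rw [ENNReal.tsum_comm]
          simp only [ENNReal.tsum_mul_left]
      _ ≤ ∑' z, ennKpow K n x z := by
          refine ENNReal.tsum_le_tsum fun z => mul_le_of_le_one_right' ?_
          rw [← ENNReal.ofReal_tsum_of_nonneg (hK z) (hrow z)]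
          exact ENNReal.ofReal_le_one.2 (hsub z)
      _ ≤ 1 := ih x

theorem ennKpow_ne_top (n : ℕ) (x y : S) : ennKpow K n x y ≠ ⊤ :=
  ENNReal.ne_top_of_tsum_ne_top ((tsum_ennKpow_le_one hK hrow hsub n x).trans_lt
    ENNReal.one_lt_top).ne y

theorem Kpow_eq_toReal_ennKpow (n : ℕ) (x y : S) : Kpow K n x y = (ennKpow K n x y).toReal := by
  induction n generalizing y with
  | zero => simp only [Kpow, ennKpow]; split_ifs <;> simp
  | succ n ih =>
    rw [ennKpow, ENNReal.tsum_toReal_eq fun z =>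
      ENNReal.mul_ne_top (ennKpow_ne_top hK hrow hsub n x z) ENNReal.ofReal_ne_top]
    simp only [Kpow_succ, ih, ENNReal.toReal_mul, ENNReal.toReal_ofReal (hK _ y)]

theorem rowMass_eq_toReal (n : ℕ) (x : S) : rowMass K n x = (∑' y, ennKpow K n x y).toReal := by
  rw [ENNReal.tsum_toReal_eq (ennKpow_ne_top hK hrow hsub n x)]
  exact tsum_congr (Kpow_eq_toReal_ennKpow hK hrow hsub n x)

theorem sum_mul_rowMass_le_rowMass_succ (n : ℕ) (x : S) (F : Finset S) :
    ∑ z ∈ F, K x z * rowMass K n z ≤ rowMass K (n + 1) x := by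
  have hmass : ∑' y, ennKpow K (n + 1) x y
      = ∑' z, ENNReal.ofReal (K x z) * ∑' y, ennKpow K n z y := by
    simp only [ennKpow_succ' n x]
    rw [ENNReal.tsum_comm]
    simp only [ENNReal.tsum_mul_left]
  have hfin : ∀ z, ENNReal.ofReal (K x z) * ∑' y, ennKpow K n z y ≠ ⊤ := fun z =>
    ENNReal.mul_ne_top ENNReal.ofReal_ne_top
      ((tsum_ennKpow_le_one hK hrow hsub n z).trans_lt ENNReal.one_lt_top).ne
  rw [rowMass_eq_toReal hK hrow hsub, hmass]
  calc ∑ z ∈ F, K x z * rowMass K n z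
      = (∑ z ∈ F, ENNReal.ofReal (K x z) * ∑' y, ennKpow K n z y).toReal := by
        rw [ENNReal.toReal_sum fun z _ => hfin z]
        simp only [ENNReal.toReal_mul, ENNReal.toReal_ofReal (hK x _),
          rowMass_eq_toReal hK hrow hsub]
    _ ≤ _ := ENNReal.toReal_mono (hmass ▸ (tsum_ennKpow_le_one hK hrow hsub (n + 1) x).trans_lt
        ENNReal.one_lt_top |>.ne) (ENNReal.sum_le_tsum F)

end Substochastic

section RatioLimit

variable {S : Type*} {K : S → S → ℝ}

theorem sum_mul_le_of_tendsto_rowMass_div (hK : ∀ x y, 0 ≤ K x y) (hrow : ∀ x, Summable (K x))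
    (hsub : ∀ x, ∑' y, K x y ≤ 1) {x₀ : S} {h : S → ℝ}
    (hlim : ∀ y, Tendsto (fun n : ℕ => rowMass K n y / rowMass K n x₀) atTop (𝓝 (h y)))
    (hmass : ∀ᶠ n in atTop, 0 < rowMass K n x₀) {q : ℝ}
    (hdecay : ∃ᶠ n in atTop, rowMass K (n + 1) x₀ ≤ q * rowMass K n x₀) (x : S) (F : Finset S) :
    ∑ z ∈ F, K x z * h z ≤ q * h x := by
  refine le_of_tendsto_of_tendsto_of_frequently
    (tendsto_finsetSum F fun z _ => (hlim z).const_mul (K x z))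
    (((hlim x).comp (tendsto_add_atTop_nat 1)).const_mul q) ?_
  refine (hdecay.and_eventually (hmass.and ((tendsto_add_atTop_nat 1).eventually hmass))).mono ?_
  rintro n ⟨hdec, hn, hn1⟩
  calc ∑ z ∈ F, K x z * (rowMass K n z / rowMass K n x₀)
      = (∑ z ∈ F, K x z * rowMass K n z) / rowMass K n x₀ := by
        simp only [Finset.sum_div, mul_div_assoc]
    _ ≤ rowMass K (n + 1) x / rowMass K n x₀ := by
        gcongr; exact sum_mul_rowMass_le_rowMass_succ hK hrow hsub n x F
    _ ≤ q * (rowMass K (n + 1) x / rowMass K (n + 1) x₀) := by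
        rw [div_le_iff₀ hn, mul_div_assoc', div_mul_eq_mul_div, le_div_iff₀ hn1]
        have := rowMass_nonneg hK (n + 1) x
        nlinarith

end RatioLimit

theorem pos_of_reflTransGen {S : Type*} {K : S → S → ℝ} {h : S → ℝ} {ρ : ℝ}
    (hsuper : ∀ a c, K a c * h c ≤ ρ * h a) (hnn : ∀ a, 0 ≤ h a) {a b : S}
    (hab : ReflTransGen (fun u v => 0 < K u v) a b) (hb : 0 < h b) : 0 < h a := by
  induction hab using ReflTransGen.head_induction_on with
  | refl => exact hb
  | @head a c hac _ hc =>
    refine (hnn a).lt_of_ne' fun ha => ?_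
    have := hsuper a c
    rw [ha, mul_zero] at this
    exact (mul_pos hac hc).not_ge this

theorem hhat_superharmonic_general {S : Type*} [Countable S] (K : S → S → ℝ)
    (hnn : ∀ x y, 0 ≤ K x y)
    (hsub : ∀ x, ∑' y, K x y ≤ 1)
    (hirr : ∀ x y : S, ∃ n, 0 < Kpow K n x y)
    (ρ : ℝ) (hρpos : 0 < ρ)
    (hρ : ∀ x y : S,
      Tendsto (fun n : ℕ => (Kpow K n x y) ^ ((n : ℝ)⁻¹)) atTop (𝓝 ρ))
    (π : S → S → ℝ) (hπnn : ∀ x y, 0 ≤ π x y) (hπ1 : ∀ x, ∑' y, π x y = 1)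
    (hyag : ∀ x y : S,
      Tendsto (fun n : ℕ => Kpow K n x y / ∑' z, Kpow K n x z) atTop (𝓝 (π x y)))
    (x₀ : S) (hhat : S → ℝ) (hhat₀ : hhat x₀ = 1)
    (hJR : ∀ y : S,
      Tendsto (fun n : ℕ => (∑' z, Kpow K n y z) / (∑' z, Kpow K n x₀ z))
        atTop (𝓝 (hhat y))) :
    (∀ y, 0 < hhat y) ∧ ∀ x : S, ∑' z, K x z * hhat z ≤ ρ * hhat x := by
  have hpos : ∀ w, ∀ᶠ n in atTop, 0 < Kpow K n x₀ w := fun w =>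
    eventually_pos_of_tendsto_rpow_inv (Kpow_nonneg hnn · x₀ w) hρpos (hρ x₀ w)
  obtain ⟨y₀, p, hp, hcmp⟩ := exists_pos_mul_rowMass_lt_Kpow hnn (hπnn x₀) (hπ1 x₀) (hyag x₀)
  have hdecay {q : ℝ} (hq : ρ < q) (M : ℕ) (hM : 0 < M) :=
    frequently_rowMass_add_le hnn hρpos.le hp hcmp (hρ x₀ y₀) hq hM
  have hrow (x : S) : Summable (K x) :=
    summable_of_frequently_rowMass_add_le hnn hpos hp hcmp (hdecay (lt_add_one ρ))
      (reflTransGen_of_Kpow_pos hnn (hirr y₀ x).choose_spec)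
  have hhat_nonneg (y : S) : 0 ≤ hhat y := ge_of_tendsto' (hJR y) fun n =>
    div_nonneg (rowMass_nonneg hnn n y) (rowMass_nonneg hnn n x₀)
  have hsuper (x : S) (F : Finset S) : ∑ z ∈ F, K x z * hhat z ≤ ρ * hhat x := by
    have hlim : Tendsto (· * hhat x) (𝓝[>] ρ) (𝓝 (ρ * hhat x)) :=
      ((continuous_mul_const _).tendsto ρ).mono_left nhdsWithin_le_nhds
    refine ge_of_tendsto hlim (eventually_nhdsWithin_of_forall fun q (hq : q ∈ Set.Ioi ρ) => ?_)
    exact sum_mul_le_of_tendsto_rowMass_div hnn hrow hsub hJR (hcmp.mono fun _ h => h.1)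
      (by simpa using hdecay hq 1 one_pos) x F
  refine ⟨fun y => ?_, fun x => tsum_le_of_sum_le' (by positivity [hhat_nonneg x]) (hsuper x)⟩
  exact pos_of_reflTransGen (fun a c => by simpa using hsuper a {c}) hhat_nonneg
    (reflTransGen_of_Kpow_pos hnn (hirr y x₀).choose_spec) (hhat₀ ▸ one_pos)

/-- If Yaglom limits exist from every state and the Jacka–Roberts ratio limit `ĥ`
exists, then `ĥ` is strictly positive and `ρ`-superharmonic. -/
theorem hhat_superharmonic {S : Type*} [Countable S] (K : S → S → ℝ)
    (hnn : ∀ x y, 0 ≤ K x y)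
    (hsub : ∀ x, ∑' y, K x y ≤ 1)
    (hirr : ∀ x y : S, ∃ n, 0 < Kpow K n x y)
    (haper : ∀ x : S, ∀ m : ℕ, (∀ n, 0 < n → 0 < Kpow K n x x → m ∣ n) → m = 1)
    (ρ : ℝ) (hρpos : 0 < ρ) (hρle : ρ ≤ 1)
    (hρ : ∀ x y : S,
      Tendsto (fun n : ℕ => (Kpow K n x y) ^ ((n : ℝ)⁻¹)) atTop (𝓝 ρ))
    (π : S → S → ℝ) (hπnn : ∀ x y, 0 ≤ π x y) (hπ1 : ∀ x, ∑' y, π x y = 1)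
    (hyag : ∀ x y : S,
      Tendsto (fun n : ℕ => Kpow K n x y / ∑' z, Kpow K n x z) atTop (𝓝 (π x y)))
    (x₀ : S) (hhat : S → ℝ) (hhat₀ : hhat x₀ = 1)
    (hJR : ∀ y : S,
      Tendsto (fun n : ℕ => (∑' z, Kpow K n y z) / (∑' z, Kpow K n x₀ z))
        atTop (𝓝 (hhat y))) :
    (∀ y, 0 < hhat y) ∧ ∀ x : S, ∑' z, K x z * hhat z ≤ ρ * hhat x :=
  hhat_superharmonic_general K hnn hsub hirr ρ hρpos hρ π hπnn hπ1 hyag x₀ hhat hhat₀ hJR
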